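/- Fix integers l ≥ 1 and r ≥ 1. There exists a constant C > 0 (depending only on l, r, d, ρ, p) such that for every s = 1,…,l and every admissible size n, the cardinality of C_l(s) satisfies |C_l(s)| ≤ C n^{ds}. -/

import Mathlib

open scoped ENNReal BigOperators
open Filter

namespace Ising

noncomputable section

/-- The `L_p` norm (`1 ≤ p ≤ ∞`) of an integer vector, via the `PiLp` norm on `ℝ^d`. -/
def lpNorm (p : ℝ≥0∞) [Fact (1 ≤ p)] {d : ℕ} (z : Fin d → ℤ) : ℝ :=
  ‖(WithLp.equiv p (Fin d → ℝ)).symm (fun i => (z i : ℝ))‖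

lemma lpNorm_neg (p : ℝ≥0∞) [Fact (1 ≤ p)] {d : ℕ} (z : Fin d → ℤ) :
    lpNorm p (fun i => -(z i)) = lpNorm p z := by
  unfold lpNorm
  have h : ((WithLp.equiv p (Fin d → ℝ)).symm (fun i => ((-(z i) : ℤ) : ℝ)))
      = -((WithLp.equiv p (Fin d → ℝ)).symm fun i => ((z i : ℤ) : ℝ)) := by
    have : (fun i => ((-(z i) : ℤ) : ℝ)) = -(fun i => ((z i : ℤ) : ℝ)) := by
      funext i; simp
    rw [this]; rfl
  rw [h, norm_neg]

/-- Vertex set of the `d`-dimensional lattice torus of size `n`: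
`{0, …, n-1}^d` with componentwise arithmetic modulo `n`. -/
abbrev Vtx (d n : ℕ) := Fin d → ZMod n

/-- Configurations: a spin (`true` = `+1`, `false` = `-1`) at each vertex. -/
abbrev Conf (d n : ℕ) := Vtx d n → Bool

/-- The spin value (`±1`) of a Boolean. -/
def spin (s : Bool) : ℝ := if s then 1 else -1

/-- The lattice torus `G_n`: distinct vertices `x, y` are adjacent iff `y - x`
(componentwise modulo `n`) admits an integer representative `z` with `‖z‖_p ≤ ρ`. -/
def torus (d ρ : ℕ) (p : ℝ≥0∞) [Fact (1 ≤ p)] (n : ℕ) : SimpleGraph (Vtx d n) where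
  Adj x y := x ≠ y ∧ ∃ z : Fin d → ℤ,
    (∀ i, ((z i : ZMod n) = y i - x i)) ∧ lpNorm p z ≤ (ρ : ℝ)
  symm := ⟨by
    rintro x y ⟨hxy, z, hz, hn⟩
    refine ⟨hxy.symm, fun i => -(z i), fun i => ?_, by rw [lpNorm_neg]; exact hn⟩
    push_cast
    rw [hz i]; ring⟩
  loopless := ⟨fun x h => h.1 rfl⟩

/-- The corresponding (infinite) lattice graph on `ℤ^d`, used as a reference to define
local configurations: distinct `x, y` are adjacent iff `‖y - x‖_p ≤ ρ`. -/
def latticeZ (d ρ : ℕ) (p : ℝ≥0∞) [Fact (1 ≤ p)] : SimpleGraph (Fin d → ℤ) where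
  Adj x y := x ≠ y ∧ lpNorm p (fun i => y i - x i) ≤ (ρ : ℝ)
  symm := ⟨by
    rintro x y ⟨hxy, hn⟩
    refine ⟨hxy.symm, ?_⟩
    have h : (fun i => x i - y i) = (fun i => -(y i - x i)) := by funext i; ring
    rw [h, lpNorm_neg]; exact hn⟩
  loopless := ⟨fun x h => h.1 rfl⟩

/-- The ball `B(x,r)` of center `x` and radius `r` for the graph distance. -/
def gball {V : Type*} (G : SimpleGraph V) (x : V) (r : ℕ) : Set V :=
  {y | G.Reachable x y ∧ G.dist x y ≤ r}

/-- The reference ball `B(0,r)` (in `ℤ^d`). -/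
def refBall (d ρ : ℕ) (p : ℝ≥0∞) [Fact (1 ≤ p)] (r : ℕ) : Set (Fin d → ℤ) :=
  gball (latticeZ d ρ p) 0 r

/-- A local configuration of radius `r`: an element of `D_r = {-1,+1}^{B(0,r)}`. -/
abbrev LocalConfig (d ρ : ℕ) (p : ℝ≥0∞) [Fact (1 ≤ p)] (r : ℕ) :=
  ↥(refBall d ρ p r) → Bool

/-- `k(η)`: the number of positive vertices of a local configuration `η`. -/
def kOf (d ρ : ℕ) (p : ℝ≥0∞) [Fact (1 ≤ p)] (r : ℕ) (η : LocalConfig d ρ p r) : ℕ :=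
  Set.ncard {v : ↥(refBall d ρ p r) | η v = true}

/-- The common degree of the vertices (number of neighbors of `0` in the lattice). -/
def degZ (d ρ : ℕ) (p : ℝ≥0∞) [Fact (1 ≤ p)] : ℕ :=
  Set.ncard {z : Fin d → ℤ | (latticeZ d ρ p).Adj 0 z}

/-- The perimeter `γ(η) = V·k(η) - 2·#{edges with both endpoints positive}`; the
number of ordered adjacent pairs of positive vertices is twice the number of such edges. -/
def perim (d ρ : ℕ) (p : ℝ≥0∞) [Fact (1 ≤ p)] (r : ℕ) (η : LocalConfig d ρ p r) : ℕ :=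
  degZ d ρ p * kOf d ρ p r η -
    Set.ncard {q : ↥(refBall d ρ p r) × ↥(refBall d ρ p r) |
      (latticeZ d ρ p).Adj q.1.1 q.2.1 ∧ η q.1 = true ∧ η q.2 = true}

/-- `η` is clean if every vertex at graph distance exactly `r` from `0` is negative. -/
def Clean (d ρ : ℕ) (p : ℝ≥0∞) [Fact (1 ≤ p)] (r : ℕ) (η : LocalConfig d ρ p r) : Prop :=
  ∀ v : ↥(refBall d ρ p r), (latticeZ d ρ p).dist 0 v.1 = r → η v = false

/-- The translate `η_x` of `η` occurs at `x` in the configuration `σ`. -/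
def occursAt (d ρ : ℕ) (p : ℝ≥0∞) [Fact (1 ≤ p)] (r n : ℕ) (η : LocalConfig d ρ p r)
    (x : Vtx d n) (σ : Conf d n) : Prop :=
  ∀ v : ↥(refBall d ρ p r), σ (x + fun i => ((v.1 i : ZMod n))) = η v

/-- The indicator `I_x^η` (as a real number). -/
def occInd (d ρ : ℕ) (p : ℝ≥0∞) [Fact (1 ≤ p)] (r n : ℕ) (η : LocalConfig d ρ p r)
    (x : Vtx d n) (σ : Conf d n) : ℝ := by
  classical exact if occursAt d ρ p r n η x σ then 1 else 0

/-- `X_n(η) = Σ_x I_x^η`: the number of copies of `η` in `G_n`. -/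
def Xcount (d ρ : ℕ) (p : ℝ≥0∞) [Fact (1 ≤ p)] (r n : ℕ) (η : LocalConfig d ρ p r)
    (σ : Conf d n) : ℕ :=
  Set.ncard {x : Vtx d n | occursAt d ρ p r n η x σ}

/-- The interaction term `Σ_{{x,y} ∈ E_n} σ(x)σ(y)`. -/
def pairSum (d ρ : ℕ) (p : ℝ≥0∞) [Fact (1 ≤ p)] (n : ℕ) (σ : Conf d n) : ℝ :=
  ∑' e : ↥(torus d ρ p n).edgeSet,
    Sym2.lift ⟨fun x y => spin (σ x) * spin (σ y), fun _ _ => mul_comm _ _⟩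
      (e : Sym2 (Vtx d n))

/-- The Hamiltonian `a Σ_x σ(x) + b Σ_{{x,y} ∈ E_n} σ(x)σ(y)`. -/
def hamiltonian (d ρ : ℕ) (p : ℝ≥0∞) [Fact (1 ≤ p)] (n : ℕ) (a b : ℝ) (σ : Conf d n) : ℝ :=
  a * (∑' x : Vtx d n, spin (σ x)) + b * pairSum d ρ p n σ

/-- The (unnormalized) Gibbs weight of a configuration. -/
def weight (d ρ : ℕ) (p : ℝ≥0∞) [Fact (1 ≤ p)] (n : ℕ) (a b : ℝ) (σ : Conf d n) : ℝ :=
  Real.exp (hamiltonian d ρ p n a b σ)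

/-- The partition function `Z_{a,b}`. -/
def partZ (d ρ : ℕ) (p : ℝ≥0∞) [Fact (1 ≤ p)] (n : ℕ) (a b : ℝ) : ℝ :=
  ∑' σ : Conf d n, weight d ρ p n a b σ

/-- The Ising (Gibbs) probability `μ_{a,b}(A)` of an event `A ⊆ X_n`. -/
def prob (d ρ : ℕ) (p : ℝ≥0∞) [Fact (1 ≤ p)] (n : ℕ) (a b : ℝ) (A : Set (Conf d n)) : ℝ :=
  (∑' σ : ↥A, weight d ρ p n a b (σ : Conf d n)) / partZ d ρ p n a b

/-- The expectation `E_{a,b}[f]`. -/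
def expect (d ρ : ℕ) (p : ℝ≥0∞) [Fact (1 ≤ p)] (n : ℕ) (a b : ℝ) (f : Conf d n → ℝ) : ℝ :=
  (∑' σ : Conf d n, weight d ρ p n a b σ * f σ) / partZ d ρ p n a b

/-- The variance `Var_{a,b}[f]`. -/
def varE (d ρ : ℕ) (p : ℝ≥0∞) [Fact (1 ≤ p)] (n : ℕ) (a b : ℝ) (f : Conf d n → ℝ) : ℝ :=
  expect d ρ p n a b (fun σ => (f σ - expect d ρ p n a b f) ^ 2)

/-- The event `{I_x^η = 1}`. -/
def event (d ρ : ℕ) (p : ℝ≥0∞) [Fact (1 ≤ p)] (r n : ℕ) (η : LocalConfig d ρ p r)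
    (x : Vtx d n) : Set (Conf d n) :=
  {σ | occursAt d ρ p r n η x σ}

/-- The event that a configuration agrees with `σ₀` on `W`. -/
def agreeOn (d n : ℕ) (W : Set (Vtx d n)) (σ₀ : Conf d n) : Set (Conf d n) :=
  {τ | ∀ x ∈ W, τ x = σ₀ x}

/-- The conditional probability `μ_{a,b}(A | σ₀ on W)`. -/
def condProb (d ρ : ℕ) (p : ℝ≥0∞) [Fact (1 ≤ p)] (n : ℕ) (a b : ℝ) (A : Set (Conf d n))
    (W : Set (Vtx d n)) (σ₀ : Conf d n) : ℝ :=
  prob d ρ p n a b (A ∩ agreeOn d n W σ₀) / prob d ρ p n a b (agreeOn d n W σ₀)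

/-- The exterior boundary `δV` of a set of vertices of the torus. -/
def boundary (d ρ : ℕ) (p : ℝ≥0∞) [Fact (1 ≤ p)] (n : ℕ) (V : Set (Vtx d n)) :
    Set (Vtx d n) :=
  {y | y ∉ V ∧ ∃ x ∈ V, (torus d ρ p n).Adj x y}

/-- The ball `B(x,R)` in the torus. -/
def tball (d ρ : ℕ) (p : ℝ≥0∞) [Fact (1 ≤ p)] (n : ℕ) (x : Vtx d n) (R : ℕ) :
    Set (Vtx d n) :=
  gball (torus d ρ p n) x R

/-- The distribution (probability mass function on `ℕ`) of an integer-valued observable. -/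
def lawOf (d ρ : ℕ) (p : ℝ≥0∞) [Fact (1 ≤ p)] (n : ℕ) (a b : ℝ) (X : Conf d n → ℕ) :
    ℕ → ℝ :=
  fun m => prob d ρ p n a b {σ | X σ = m}

/-- The distribution on `ℕ` of a real-valued (integer-valued in fact) observable. -/
def lawR (d ρ : ℕ) (p : ℝ≥0∞) [Fact (1 ≤ p)] (n : ℕ) (a b : ℝ) (X : Conf d n → ℝ) :
    ℕ → ℝ :=
  fun m => prob d ρ p n a b {σ | X σ = (m : ℝ)}

/-- The Poisson distribution with parameter `θ`, as a pmf on `ℕ`. -/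
def poissonPMF (θ : ℝ) : ℕ → ℝ :=
  fun m => Real.exp (-θ) * θ ^ m / (Nat.factorial m : ℝ)

/-- Total variation distance between two distributions on `ℕ`:
`d_TV(μ,ν) = sup_A |μ(A) - ν(A)|`. -/
def dTV (f g : ℕ → ℝ) : ℝ :=
  ⨆ A : Set ℕ, |(∑' m : ↥A, f (m : ℕ)) - ∑' m : ↥A, g (m : ℕ)|

/-- The clean extension `η̊ ∈ D_{r+1}` of `η ∈ D_r`: it agrees with `η` on `B(0,r)` and is
negative at every vertex at distance exactly `r+1` from `0`. -/
def ringExt (d ρ : ℕ) (p : ℝ≥0∞) [Fact (1 ≤ p)] (r : ℕ) (η : LocalConfig d ρ p r) :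
    LocalConfig d ρ p (r + 1) := by
  classical exact fun v => if h : v.1 ∈ refBall d ρ p r then η ⟨v.1, h⟩ else false

/-- `D_r(η) = {η' ∈ D_r : V_+(η') ⊇ V_+(η)}`. -/
def Dfam (d ρ : ℕ) (p : ℝ≥0∞) [Fact (1 ≤ p)] (r : ℕ) (η : LocalConfig d ρ p r) :
    Set (LocalConfig d ρ p r) :=
  {η' | ∀ v, η v = true → η' v = true}

/-- `Ī_x^η = Σ_{η' ∈ D_r(η)} I_x^{η'}`. -/
def barInd (d ρ : ℕ) (p : ℝ≥0∞) [Fact (1 ≤ p)] (r n : ℕ) (η : LocalConfig d ρ p r)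
    (x : Vtx d n) (σ : Conf d n) : ℝ :=
  ∑' η' : ↥(Dfam d ρ p r η), occInd d ρ p r n (η' : LocalConfig d ρ p r) x σ

/-- `X̄_n(η) = Σ_x Ī_x^η`. -/
def Xbar (d ρ : ℕ) (p : ℝ≥0∞) [Fact (1 ≤ p)] (r n : ℕ) (η : LocalConfig d ρ p r)
    (σ : Conf d n) : ℝ :=
  ∑' x : Vtx d n, barInd d ρ p r n η x σ

/-- The closed neighbourhood `B̄ = B ∪ δB` of a torus ball. -/
def cball (d ρ : ℕ) (p : ℝ≥0∞) [Fact (1 ≤ p)] (n : ℕ) (x : Vtx d n) (r : ℕ) :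
    Set (Vtx d n) :=
  tball d ρ p n x r ∪ boundary d ρ p n (tball d ρ p n x r)

/-- One step of the connectivity relation between the balls of radius `r` centered at the
entries of a tuple: `B̄(x_i) ∩ B(x_j) ≠ ∅`. -/
def stepRel (d ρ : ℕ) (p : ℝ≥0∞) [Fact (1 ≤ p)] (n r : ℕ) {l : ℕ} (x : Fin l → Vtx d n)
    (i j : Fin l) : Prop :=
  (cball d ρ p n (x i) r ∩ tball d ρ p n (x j) r).Nonempty

/-- The number of equivalence classes, for the connectivity relation, of the set of balls
`{B(x_1,r), …, B(x_l,r)}`. -/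
def numClasses (d ρ : ℕ) (p : ℝ≥0∞) [Fact (1 ≤ p)] (n r : ℕ) {l : ℕ}
    (x : Fin l → Vtx d n) : ℕ :=
  Set.ncard (Set.range fun i : Fin l =>
    {j : Fin l | Relation.EqvGen (stepRel d ρ p n r x) i j})

/-- `C_l(s)`: the set of `l`-tuples of vertices whose set of balls of radius `r` is composed
of exactly `s` equivalence classes for the connectivity relation. -/
def tupleClass (d ρ : ℕ) (p : ℝ≥0∞) [Fact (1 ≤ p)] (n r l s : ℕ) :
    Set (Fin l → Vtx d n) :=
  {x | numClasses d ρ p n r x = s}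

/-! Connectivity of two balls forces their centres to be `(2r+1)ρ`-close coordinatewise on the
torus, so within a class every centre lies within `l(2r+1)ρ` of a chosen representative,
reached along a simple chain of at most `l` links. A tuple of `C_l(s)` is therefore determined
by the map sending each index to the representative of its class (at most `l^l` choices), at
most `s` representatives (`n^{ds}` choices) and the `l` bounded offsets (a constant number of
choices). -/

def torusBox (d n c : ℕ) : Set (Vtx d n) :=
  {v | ∃ z : Fin d → ℤ, (∀ i, (z i : ZMod n) = v i) ∧ ∀ i, |z i| ≤ c}

section TorusBox

variable {d n : ℕ}

lemma zero_mem_torusBox (c : ℕ) : (0 : Vtx d n) ∈ torusBox d n c :=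
  ⟨0, fun _ => by simp, fun _ => by simp⟩

lemma neg_mem_torusBox {c : ℕ} {v : Vtx d n} (hv : v ∈ torusBox d n c) :
    -v ∈ torusBox d n c := by
  obtain ⟨z, hz, hb⟩ := hv
  exact ⟨-z, fun i => by simp [hz i], fun i => by simpa using hb i⟩

lemma add_mem_torusBox {a b : ℕ} {u v : Vtx d n} (hu : u ∈ torusBox d n a)
    (hv : v ∈ torusBox d n b) : u + v ∈ torusBox d n (a + b) := by
  obtain ⟨z, hz, hzb⟩ := hu
  obtain ⟨w, hw, hwb⟩ := hv
  refine ⟨z + w, fun i => by simp [hz i, hw i], fun i => ?_⟩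
  push_cast
  exact (abs_add_le _ _).trans (add_le_add (hzb i) (hwb i))

lemma sub_mem_torusBox {a b : ℕ} {u v : Vtx d n} (hu : u ∈ torusBox d n a)
    (hv : v ∈ torusBox d n b) : u - v ∈ torusBox d n (a + b) := by
  simpa only [sub_eq_add_neg] using add_mem_torusBox hu (neg_mem_torusBox hv)

lemma torusBox_mono {a b : ℕ} (hab : a ≤ b) : torusBox d n a ⊆ torusBox d n b := by
  rintro v ⟨z, hz, hb⟩
  exact ⟨z, hz, fun i => (hb i).trans (by exact_mod_cast hab)⟩

lemma ncard_torusBox_le (c : ℕ) : (torusBox d n c).ncard ≤ (2 * c + 1) ^ d := by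
  let box : Finset (Fin d → ℤ) := Fintype.piFinset fun _ => Finset.Icc (-(c : ℤ)) c
  have hsub : torusBox d n c ⊆ (fun z : Fin d → ℤ => fun i => (z i : ZMod n)) '' box := by
    rintro v ⟨z, hz, hb⟩
    refine ⟨z, ?_, funext hz⟩
    simp only [box, Finset.mem_coe, Fintype.mem_piFinset, Finset.mem_Icc]
    exact fun i => abs_le.mp (hb i)
  calc (torusBox d n c).ncard ≤ (box : Set (Fin d → ℤ)).ncard :=
        (Set.ncard_le_ncard hsub (box.finite_toSet.image _)).trans
          (Set.ncard_image_le box.finite_toSet)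
    _ = (2 * c + 1) ^ d := by
        rw [Set.ncard_coe_finset, Fintype.card_piFinset, Finset.prod_const, Finset.card_univ,
          Fintype.card_fin, Int.card_Icc]
        congr 1
        omega

lemma sub_mem_torusBox_of_walk {V : Type*} {G : SimpleGraph V} (f : V → Vtx d n) {c : ℕ}
    (hG : ∀ u v, G.Adj u v → f v - f u ∈ torusBox d n c) {u v : V} (w : G.Walk u v) :
    f v - f u ∈ torusBox d n (w.length * c) := by
  induction w with
  | nil => simpa using zero_mem_torusBox 0
  | @cons a b c' h q ih =>
      have hsum := add_mem_torusBox (hG a b h) ih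
      rw [sub_add_sub_cancel'] at hsum
      rwa [SimpleGraph.Walk.length_cons, Nat.succ_mul, add_comm]

end TorusBox

section TorusDisplacement

variable {d ρ n : ℕ} {p : ℝ≥0∞} [Fact (1 ≤ p)]

lemma abs_le_lpNorm (z : Fin d → ℤ) (i : Fin d) : |(z i : ℝ)| ≤ lpNorm p z :=
  PiLp.norm_apply_le ((WithLp.equiv p (Fin d → ℝ)).symm fun i => (z i : ℝ)) i

lemma sub_mem_torusBox_of_adj {u v : Vtx d n} (h : (torus d ρ p n).Adj u v) :
    v - u ∈ torusBox d n ρ := by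
  obtain ⟨-, z, hz, hnorm⟩ := h
  refine ⟨z, hz, fun i => ?_⟩
  have hi : |(z i : ℝ)| ≤ ρ := (abs_le_lpNorm z i).trans hnorm
  exact_mod_cast hi

lemma sub_mem_torusBox_of_mem_tball {x y : Vtx d n} {R : ℕ} (h : y ∈ tball d ρ p n x R) :
    y - x ∈ torusBox d n (R * ρ) := by
  obtain ⟨hreach, hdist⟩ := h
  obtain ⟨w, hw⟩ := hreach.exists_walk_length_eq_dist
  refine torusBox_mono ?_ (sub_mem_torusBox_of_walk id (fun _ _ => sub_mem_torusBox_of_adj) w)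
  rw [hw]
  exact Nat.mul_le_mul_right ρ hdist

lemma sub_mem_torusBox_of_mem_cball {x y : Vtx d n} {R : ℕ} (h : y ∈ cball d ρ p n x R) :
    y - x ∈ torusBox d n ((R + 1) * ρ) := by
  rcases h with h | ⟨-, w, hw, hadj⟩
  · exact torusBox_mono (Nat.mul_le_mul_right ρ R.le_succ) (sub_mem_torusBox_of_mem_tball h)
  · rw [← sub_add_sub_cancel' w x y, add_one_mul]
    exact add_mem_torusBox (sub_mem_torusBox_of_mem_tball hw) (sub_mem_torusBox_of_adj hadj)

lemma sub_mem_torusBox_of_stepRel {r l : ℕ} {x : Fin l → Vtx d n} {i j : Fin l}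
    (h : stepRel d ρ p n r x i j) : x j - x i ∈ torusBox d n ((2 * r + 1) * ρ) := by
  obtain ⟨y, hyi, hyj⟩ := h
  have hmem := sub_mem_torusBox (sub_mem_torusBox_of_mem_cball hyi)
    (sub_mem_torusBox_of_mem_tball hyj)
  rw [sub_sub_sub_cancel_left] at hmem
  convert hmem using 2
  ring

end TorusDisplacement

lemma _root_.SimpleGraph.reachable_fromRel_of_eqvGen {α : Type*} {R : α → α → Prop} {a b : α}
    (h : Relation.EqvGen R a b) : (SimpleGraph.fromRel R).Reachable a b := by
  induction h with
  | rel a b hab =>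
      by_cases heq : a = b
      · exact heq ▸ SimpleGraph.Reachable.refl a
      · exact (SimpleGraph.fromRel_adj R a b |>.mpr ⟨heq, Or.inl hab⟩).reachable
  | refl a => exact SimpleGraph.Reachable.refl a
  | symm _ _ _ ih => exact ih.symm
  | trans _ _ _ _ _ ih₁ ih₂ => exact ih₁.trans ih₂

lemma exists_eqvGen_rep {ι : Type*} [Finite ι] (R : ι → ι → Prop) :
    ∃ g : ι → ι, (∀ i, Relation.EqvGen R (g i) i) ∧
      (Set.range g).ncard ≤ (Set.range fun i => {j | Relation.EqvGen R i j}).ncard := by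
  rcases isEmpty_or_nonempty ι with _ | _
  · exact ⟨id, isEmptyElim, by simp⟩
  let cls : ι → Set ι := fun i => {j | Relation.EqvGen R i j}
  have hrep : ∀ i, cls (Function.invFun cls (cls i)) = cls i :=
    fun i => Function.invFun_eq ⟨i, rfl⟩
  refine ⟨Function.invFun cls ∘ cls, fun i => ?_, ?_⟩
  · have hi : i ∈ cls (Function.invFun cls (cls i)) := (hrep i).symm ▸ Relation.EqvGen.refl i
    exact hi
  · rw [Set.range_comp]
    exact Set.ncard_image_le (Set.toFinite _)

lemma ncard_setOf_sub_mem_le {ι G : Type*} [Fintype ι] [AddGroup G] [Finite G] (g : ι → ι)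
    (S : Set G) :
    {x : ι → G | ∀ i, x i - x (g i) ∈ S}.ncard ≤
      Nat.card G ^ (Set.range g).ncard * S.ncard ^ Fintype.card ι := by
  let encode : {x : ι → G | ∀ i, x i - x (g i) ∈ S} → (Set.range g → G) × (ι → S) :=
    fun x => (fun k => x.1 k, fun i => ⟨x.1 i - x.1 (g i), x.2 i⟩)
  have hinj : Function.Injective encode := by
    intro x y hxy
    obtain ⟨hroots, hoffsets⟩ := Prod.ext_iff.mp hxy
    ext i : 2
    have hroot : x.1 (g i) = y.1 (g i) := congrFun hroots ⟨g i, Set.mem_range_self i⟩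
    have hoffset : x.1 i - x.1 (g i) = y.1 i - y.1 (g i) :=
      congrArg Subtype.val (congrFun hoffsets i)
    rw [← sub_add_cancel (x.1 i) (x.1 (g i)), ← sub_add_cancel (y.1 i) (y.1 (g i)), hoffset,
      hroot]
  rw [← Nat.card_coe_set_eq]
  refine (Nat.card_le_card_of_injective encode hinj).trans_eq ?_
  rw [Nat.card_prod, Nat.card_fun, Nat.card_fun, Nat.card_coe_set_eq, Nat.card_coe_set_eq,
    Nat.card_eq_fintype_card (α := ι)]

section ClassCount

variable {d ρ n : ℕ} {p : ℝ≥0∞} [Fact (1 ≤ p)]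

lemma sub_mem_torusBox_of_eqvGen {r l : ℕ} (x : Fin l → Vtx d n) {i j : Fin l}
    (h : Relation.EqvGen (stepRel d ρ p n r x) i j) :
    x j - x i ∈ torusBox d n (l * ((2 * r + 1) * ρ)) := by
  obtain ⟨w⟩ := SimpleGraph.reachable_fromRel_of_eqvGen h
  have hadj : ∀ a b, (SimpleGraph.fromRel (stepRel d ρ p n r x)).Adj a b →
      x b - x a ∈ torusBox d n ((2 * r + 1) * ρ) := by
    rintro a b ⟨-, hab | hba⟩
    · exact sub_mem_torusBox_of_stepRel hab
    · simpa only [neg_sub] using neg_mem_torusBox (sub_mem_torusBox_of_stepRel hba)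
  have hlen : w.bypass.length < l := by
    simpa only [Fintype.card_fin] using w.bypass_isPath.length_lt
  exact torusBox_mono (Nat.mul_le_mul_right _ hlen.le) (sub_mem_torusBox_of_walk x hadj _)

lemma ncard_tupleClass_le [NeZero n] (r l s : ℕ) :
    (tupleClass d ρ p n r l s).ncard ≤
      l ^ l * (2 * (l * ((2 * r + 1) * ρ)) + 1) ^ (d * l) * n ^ (d * s) := by
  set c := l * ((2 * r + 1) * ρ)
  let piece : (Fin l → Fin l) → Set (Fin l → Vtx d n) :=
    fun g => {x | ∀ i, x i - x (g i) ∈ torusBox d n c}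
  let reps := Finset.univ.filter fun g : Fin l → Fin l => (Set.range g).ncard ≤ s
  have hcover : tupleClass d ρ p n r l s ⊆ ⋃ g ∈ reps, piece g := by
    intro x hx
    obtain ⟨g, hg, hcard⟩ := exists_eqvGen_rep (stepRel d ρ p n r x)
    exact Set.mem_biUnion (x := g) (by simpa [reps] using hcard.trans_eq hx)
      fun i => sub_mem_torusBox_of_eqvGen x (hg i)
  have hpiece : ∀ g ∈ reps, (piece g).ncard ≤ (2 * c + 1) ^ (d * l) * n ^ (d * s) := by
    intro g hg
    have hcard : Nat.card (Vtx d n) = n ^ d := by simp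
    refine (ncard_setOf_sub_mem_le g _).trans ?_
    rw [hcard, Fintype.card_fin, mul_comm, pow_mul, pow_mul]
    gcongr
    · exact ncard_torusBox_le c
    · exact Nat.one_le_pow _ _ (Nat.pos_of_ne_zero (NeZero.ne n))
    · simpa [reps] using hg
  calc (tupleClass d ρ p n r l s).ncard ≤ (⋃ g ∈ reps, piece g).ncard :=
        Set.ncard_le_ncard hcover (Set.toFinite _)
    _ ≤ ∑ g ∈ reps, (piece g).ncard := reps.set_ncard_biUnion_le piece
    _ ≤ reps.card * ((2 * c + 1) ^ (d * l) * n ^ (d * s)) :=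
        Finset.sum_le_card_nsmul _ _ _ hpiece
    _ ≤ l ^ l * ((2 * c + 1) ^ (d * l) * n ^ (d * s)) := by
        gcongr
        exact (Finset.card_filter_le _ _).trans_eq (by simp)
    _ = l ^ l * (2 * c + 1) ^ (d * l) * n ^ (d * s) := (mul_assoc _ _ _).symm

end ClassCount

theorem stmt_10_general
    (d ρ r l : ℕ)
    (p : ℝ≥0∞) [Fact (1 ≤ p)] :
    ∃ C : ℝ, 0 < C ∧ ∀ s : ℕ, 1 ≤ s → s ≤ l → ∀ n : ℕ, 2 * ρ * l * (2 * r + 1) < n →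
      (Set.ncard (tupleClass d ρ p n r l s) : ℝ) ≤ C * (n : ℝ) ^ (d * s) := by
  refine ⟨(l ^ l * (2 * (l * ((2 * r + 1) * ρ)) + 1) ^ (d * l) : ℕ),
    Nat.cast_pos.mpr (Nat.mul_pos Nat.pow_self_pos (Nat.pow_pos (Nat.succ_pos _))), ?_⟩
  intro s _ _ n hn
  have : NeZero n := ⟨by omega⟩
  exact_mod_cast ncard_tupleClass_le r l s

/-- **Lemma (cardinality of `C_l(s)`, upper bound).**  There is a constant `C > 0` such that
`|C_l(s)| ≤ C n^{ds}` for every `s = 1, …, l` and every admissible `n`. -/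
theorem stmt_10
    (d ρ r l : ℕ) (hd : 1 ≤ d) (hρ : 1 ≤ ρ) (hr : 1 ≤ r) (hl : 1 ≤ l)
    (p : ℝ≥0∞) [Fact (1 ≤ p)] :
    ∃ C : ℝ, 0 < C ∧ ∀ s : ℕ, 1 ≤ s → s ≤ l → ∀ n : ℕ, 2 * ρ * l * (2 * r + 1) < n →
      (Set.ncard (tupleClass d ρ p n r l s) : ℝ) ≤ C * (n : ℝ) ^ (d * s) :=
  stmt_10_general d ρ r l p

end

end Ising
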